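/- Let m ≥ 1, k, l ∈ ℕ, let P : ℝ^m → ℝ_{0,m} be a left monogenic function, homogeneous of degree k, satisfying Σ_{j=1}^m e_j P(x) e_j = (−1)^l (2l − m) P(x) for all x, and let D : (0,∞) → ℝ be continuously differentiable. Then for all x ≠ 0, writing r = |x|, one has ∂_x(D(r) ι(x) P(x) ι(x)) = (−1)^{l+1}(2l − m) D(r) ι(x) P(x) − ((2k + m + 2)D(r) + r D′(r)) P(x) ι(x). -/

import Mathlib

noncomputable section

open scoped BigOperators

/-- The `ℓ¹`-norm with respect to a Hamel basis.  On a finite-dimensional real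
vector space (such as the Clifford algebra `ℝ_{0,m}`) the induced topology is
the canonical one. -/
def hamelNorm (V : Type) [AddCommGroup V] [Module ℝ V] : AddGroupNorm V where
  toFun v := ∑ i ∈ ((Module.Basis.ofVectorSpace ℝ V).repr v).support,
      |(Module.Basis.ofVectorSpace ℝ V).repr v i|
  map_zero' := by simp
  add_le' := by
    intro x y
    classical
    set b := Module.Basis.ofVectorSpace ℝ V
    have hrepr : b.repr (x + y) = b.repr x + b.repr y := map_add _ _ _
    calc ∑ i ∈ (b.repr (x + y)).support, |b.repr (x + y) i|
        ≤ ∑ i ∈ (b.repr x).support ∪ (b.repr y).support, |b.repr (x + y) i| := by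
          refine Finset.sum_le_sum_of_subset_of_nonneg ?_ (fun i _ _ => abs_nonneg _)
          rw [hrepr]; exact Finsupp.support_add
      _ ≤ ∑ i ∈ (b.repr x).support ∪ (b.repr y).support, (|b.repr x i| + |b.repr y i|) := by
          refine Finset.sum_le_sum fun i _ => ?_
          rw [hrepr, Finsupp.add_apply]; exact abs_add_le _ _
      _ = (∑ i ∈ (b.repr x).support ∪ (b.repr y).support, |b.repr x i|)
            + ∑ i ∈ (b.repr x).support ∪ (b.repr y).support, |b.repr y i| :=
          Finset.sum_add_distrib
      _ = (∑ i ∈ (b.repr x).support, |b.repr x i|)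
            + ∑ i ∈ (b.repr y).support, |b.repr y i| := by
          rw [← Finset.sum_subset Finset.subset_union_left
              (fun i _ hi => by simp [Finsupp.notMem_support_iff.mp hi]),
            ← Finset.sum_subset Finset.subset_union_right
              (fun i _ hi => by simp [Finsupp.notMem_support_iff.mp hi])]
  neg' := by
    intro x
    simp [map_neg]
  eq_zero_of_map_eq_zero' := by
    classical
    intro x hx
    set b := Module.Basis.ofVectorSpace ℝ V
    have h0 : b.repr x = 0 := by
      ext i
      by_cases hi : i ∈ (b.repr x).support
      · exact abs_eq_zero.mp
          ((Finset.sum_eq_zero_iff_of_nonneg (fun i _ => abs_nonneg _)).mp hx i hi)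
      · simpa using Finsupp.notMem_support_iff.mp hi
    exact b.repr.map_eq_zero_iff.mp h0

/-- The quadratic form `Q(v) = -‖v‖²` on `ℝ^m`. -/
def Qneg (m : ℕ) : QuadraticForm ℝ (EuclideanSpace ℝ (Fin m)) :=
  (QuadraticMap.weightedSumSquares ℝ fun _ : Fin m => (-1 : ℝ)).comp
    (WithLp.linearEquiv 2 ℝ (Fin m → ℝ)).toLinearMap

/-- The real Clifford algebra `ℝ_{0,m}`. -/
abbrev Cl (m : ℕ) := CliffordAlgebra (Qneg m)

/-- The canonical embedding `ι : ℝ^m → ℝ_{0,m}`. -/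
abbrev ιC (m : ℕ) : EuclideanSpace ℝ (Fin m) →ₗ[ℝ] Cl m := CliffordAlgebra.ι (Qneg m)

/-- The generators `e₁, …, e_m` of `ℝ_{0,m}`. -/
def eC (m : ℕ) (j : Fin m) : Cl m := ιC m (EuclideanSpace.single j 1)

noncomputable instance (m : ℕ) : NormedAddCommGroup (Cl m) :=
  (hamelNorm (Cl m)).toNormedAddCommGroup

noncomputable instance (m : ℕ) : NormedSpace ℝ (Cl m) where
  norm_smul_le a v := by
    classical
    have hv : ‖v‖ = ∑ i ∈ ((Module.Basis.ofVectorSpace ℝ (Cl m)).repr v).support,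
        |(Module.Basis.ofVectorSpace ℝ (Cl m)).repr v i| := rfl
    have hav : ‖a • v‖ = ∑ i ∈ ((Module.Basis.ofVectorSpace ℝ (Cl m)).repr (a • v)).support,
        |(Module.Basis.ofVectorSpace ℝ (Cl m)).repr (a • v) i| := rfl
    set b := Module.Basis.ofVectorSpace ℝ (Cl m)
    have hrepr : b.repr (a • v) = a • b.repr v := map_smul _ _ _
    rw [hav, hv, Real.norm_eq_abs]
    calc ∑ i ∈ (b.repr (a • v)).support, |b.repr (a • v) i|
        ≤ ∑ i ∈ (b.repr v).support, |b.repr (a • v) i| := by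
          refine Finset.sum_le_sum_of_subset_of_nonneg ?_ (fun i _ _ => abs_nonneg _)
          rw [hrepr]; exact Finsupp.support_smul
      _ = ∑ i ∈ (b.repr v).support, |a| * |b.repr v i| := by
          refine Finset.sum_congr rfl fun i _ => ?_
          rw [hrepr, Finsupp.smul_apply, smul_eq_mul, abs_mul]
      _ = |a| * ∑ i ∈ (b.repr v).support, |b.repr v i| := by rw [Finset.mul_sum]

/-- The Dirac operator acting from the left: `∂_x f = Σⱼ eⱼ (∂_{xⱼ} f)`. -/
def diracL (m : ℕ) (f : EuclideanSpace ℝ (Fin m) → Cl m) (x : EuclideanSpace ℝ (Fin m)) : Cl m :=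
  ∑ j, eC m j * fderiv ℝ f x (EuclideanSpace.single j 1)

/-- The Dirac operator acting from the right: `f ∂_x = Σⱼ (∂_{xⱼ} f) eⱼ`. -/
def diracR (m : ℕ) (f : EuclideanSpace ℝ (Fin m) → Cl m) (x : EuclideanSpace ℝ (Fin m)) : Cl m :=
  ∑ j, fderiv ℝ f x (EuclideanSpace.single j 1) * eC m j


/-!
Write `r = ‖x‖` and `G y = y P(y) y` (suppressing `ι`). The Leibniz rule gives
`∂_x(D(r) G) = D(r) ∂_x G + (D'(r)/r) x G`, and `x x = -r²` turns the last term into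
`-r D'(r) P x`. In `∂_x G = Σⱼ eⱼ eⱼ P x + Σⱼ eⱼ x (∂ⱼP) x + Σⱼ eⱼ x P eⱼ`, the first sum is `-m P x`;
in the other two, moving `eⱼ` past `x` via `eⱼ x = -2xⱼ - x eⱼ` gives
`-2 (x·∇P) x - x (∂_x P) x` and `-2 P x - x (Σⱼ eⱼ P eⱼ)`. Euler's relation `x·∇P = kP`,
monogenicity `∂_x P = 0` and the `l`-vector identity for `Σⱼ eⱼ P eⱼ` then give the formula.
-/

section FiniteDimensional
variable {R M : Type*} [CommRing R] [Nontrivial R] [AddCommGroup M] [Module R M]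
  [Module.Free R M] [Module.Finite R M]

theorem exteriorPower.eq_bot_of_finrank_lt {i : ℕ} (hi : Module.finrank R M < i) :
    ⋀[R]^i M = ⊥ := by
  have : Subsingleton (⋀[R]^i M) := by
    rw [← Module.finrank_eq_zero_iff_of_free R, exteriorPower.finrank_eq,
      Nat.choose_eq_zero_of_lt hi]
  exact Submodule.eq_bot_of_subsingleton

instance ExteriorAlgebra.instModuleFinite : Module.Finite R (ExteriorAlgebra R M) := by
  rw [Module.finite_def]
  suffices h : ⊤ = ⨆ i ∈ Finset.range (Module.finrank R M + 1), ⋀[R]^i M by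
    rw [h]
    exact Submodule.fg_biSup _ _ fun i _ => Module.Finite.iff_fg.mp inferInstance
  refine le_antisymm ?_ le_top
  rw [← CliffordAlgebra.iSup_ι_range_eq_top]
  refine iSup_le fun i => ?_
  rcases le_or_gt i (Module.finrank R M) with hi | hi
  · exact le_biSup (fun i => ⋀[R]^i M) (Finset.mem_range_succ_iff.mpr hi)
  · exact (exteriorPower.eq_bot_of_finrank_lt hi).le.trans bot_le

instance CliffordAlgebra.instModuleFinite (Q : QuadraticForm R M) [Invertible (2 : R)] :
    Module.Finite R (CliffordAlgebra Q) :=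
  Module.Finite.equiv (CliffordAlgebra.equivExterior Q).symm

end FiniteDimensional

theorem hasFDerivAt_norm_of_ne_zero {F : Type*} [NormedAddCommGroup F] [InnerProductSpace ℝ F]
    {x : F} (hx : x ≠ 0) : HasFDerivAt (‖·‖) (‖x‖⁻¹ • innerSL ℝ x) x := by
  have hsq := (hasFDerivAt_id x).norm_sq.sqrt (by simpa using hx)
  simp only [id, Real.sqrt_sq (norm_nonneg _)] at hsq
  convert hsq using 1
  ext v
  simp only [smul_apply, coe_innerSL_apply, smul_eq_mul, one_div,
    mul_inv_rev, ContinuousLinearMap.comp_id, nsmul_eq_mul, Nat.cast_ofNat]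
  field_simp

theorem fderiv_apply_self_of_homogeneous {E F : Type*} [NormedAddCommGroup E] [NormedSpace ℝ E]
    [NormedAddCommGroup F] [NormedSpace ℝ F] {P : E → F} {k : ℕ} {x : E}
    (hP : DifferentiableAt ℝ P x) (hhom : ∀ t : ℝ, P (t • x) = t ^ k • P x) :
    fderiv ℝ P x x = (k : ℝ) • P x := by
  have hray : HasDerivAt (fun t : ℝ => P (t • x)) (fderiv ℝ P x x) 1 := by
    have hline : HasDerivAt (fun t : ℝ => t • x) x 1 := by
      simpa using (hasDerivAt_id (1 : ℝ)).smul_const x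
    exact hP.hasFDerivAt.comp_hasDerivAt_of_eq (1 : ℝ) hline (one_smul ℝ x).symm
  have hpow : HasDerivAt (fun t : ℝ => t ^ k • P x) ((k : ℝ) • P x) 1 := by
    simpa using (hasDerivAt_pow k (1 : ℝ)).smul_const (P x)
  exact hray.unique (by simpa only [hhom] using hpow)

section Clifford
variable {m : ℕ}
open CliffordAlgebra

theorem Qneg_apply (v : EuclideanSpace ℝ (Fin m)) : Qneg m v = -‖v‖ ^ 2 := by
  simp [Qneg, QuadraticMap.weightedSumSquares_apply, EuclideanSpace.real_norm_sq_eq, ← sq]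

theorem Qneg_polar (v w : EuclideanSpace ℝ (Fin m)) :
    QuadraticMap.polar (Qneg m) v w = -2 * inner ℝ v w := by
  simp only [QuadraticMap.polar, Qneg_apply, norm_add_sq_real]
  ring

@[simp]
theorem ιC_single (j : Fin m) : ιC m (EuclideanSpace.single j 1) = eC m j := rfl

theorem ιC_mul_self (v : EuclideanSpace ℝ (Fin m)) : ιC m v * ιC m v = -(‖v‖ ^ 2 • 1) := by
  rw [ι_sq_scalar, Qneg_apply, Algebra.algebraMap_eq_smul_one, neg_smul]

theorem eC_mul_self (j : Fin m) : eC m j * eC m j = -1 := by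
  rw [eC, ιC_mul_self]
  simp

theorem eC_mul_ιC (j : Fin m) (v : EuclideanSpace ℝ (Fin m)) :
    eC m j * ιC m v = -(2 * v j) • 1 - ιC m v * eC m j := by
  rw [eq_sub_iff_add_eq, eC, ι_mul_ι_add_swap, Qneg_polar, Algebra.algebraMap_eq_smul_one,
    EuclideanSpace.inner_single_left]
  simp

theorem ιC_eq_sum (v : EuclideanSpace ℝ (Fin m)) : ιC m v = ∑ j, v j • eC m j := by
  conv_lhs => rw [← (EuclideanSpace.basisFun (Fin m) ℝ).sum_repr v]
  simp

end Clifford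

section Calculus
variable {m : ℕ}

/- The Hamel-basis norm on `Cl m` is not submultiplicative, so `Cl m` is no normed ring and
`HasFDerivAt.mul` does not apply; multiplication is continuous by finite-dimensionality. -/
def mulCLM (m : ℕ) : Cl m →L[ℝ] Cl m →L[ℝ] Cl m :=
  LinearMap.toContinuousLinearMap
    (LinearMap.toContinuousLinearMap.toLinearMap ∘ₗ LinearMap.mul ℝ (Cl m))

@[simp]
theorem mulCLM_apply (a b : Cl m) : mulCLM m a b = a * b := rfl

theorem mulCLM_mul (a b : Cl m) : mulCLM m (a * b) = mulCLM m a ∘L mulCLM m b := by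
  ext c
  simp [mul_assoc]

def ιCLM (m : ℕ) : EuclideanSpace ℝ (Fin m) →L[ℝ] Cl m := (ιC m).toContinuousLinearMap

@[simp]
theorem ιCLM_apply (v : EuclideanSpace ℝ (Fin m)) : ιCLM m v = ιC m v := rfl

theorem hasFDerivAt_mul {E : Type*} [NormedAddCommGroup E] [NormedSpace ℝ E]
    {f g : E → Cl m} {f' g' : E →L[ℝ] Cl m} {x : E}
    (hf : HasFDerivAt f f' x) (hg : HasFDerivAt g g' x) :
    HasFDerivAt (fun y => f y * g y) ((mulCLM m).flip (g x) ∘L f' + mulCLM m (f x) ∘L g') x := by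
  refine ((mulCLM m).hasFDerivAt_of_bilinear hf hg).congr_fderiv ?_
  ext v
  simp [add_comm]

theorem hasFDerivAt_ιC_mul_mul_ιC {P : EuclideanSpace ℝ (Fin m) → Cl m}
    {P' : EuclideanSpace ℝ (Fin m) →L[ℝ] Cl m} {x : EuclideanSpace ℝ (Fin m)}
    (hP : HasFDerivAt P P' x) :
    HasFDerivAt (fun y => ιC m y * P y * ιC m y)
      ((mulCLM m).flip (ιC m x) ∘L ((mulCLM m).flip (P x) ∘L ιCLM m + mulCLM m (ιC m x) ∘L P')
        + mulCLM m (ιC m x * P x) ∘L ιCLM m) x :=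
  hasFDerivAt_mul (hasFDerivAt_mul (ιCLM m).hasFDerivAt hP) (ιCLM m).hasFDerivAt

end Calculus

section Dirac
variable {m : ℕ}

def diracLin (m : ℕ) : (EuclideanSpace ℝ (Fin m) →L[ℝ] Cl m) →ₗ[ℝ] Cl m where
  toFun L := ∑ j, eC m j * L (EuclideanSpace.single j 1)
  map_add' L L' := by simp [mul_add, Finset.sum_add_distrib]
  map_smul' c L := by simp [Finset.smul_sum]

theorem diracLin_apply (L : EuclideanSpace ℝ (Fin m) →L[ℝ] Cl m) :
    diracLin m L = ∑ j, eC m j * L (EuclideanSpace.single j 1) := rfl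

theorem diracL_eq_diracLin_fderiv (f : EuclideanSpace ℝ (Fin m) → Cl m)
    (x : EuclideanSpace ℝ (Fin m)) : diracL m f x = diracLin m (fderiv ℝ f x) := rfl

theorem diracLin_ιCLM : diracLin m (ιCLM m) = -((m : ℝ) • 1) := by
  simp [diracLin_apply, eC_mul_self, Nat.cast_smul_eq_nsmul]

theorem diracLin_mulCLM_flip_comp (b : Cl m) (L : EuclideanSpace ℝ (Fin m) →L[ℝ] Cl m) :
    diracLin m ((mulCLM m).flip b ∘L L) = diracLin m L * b := by
  simp [diracLin_apply, Finset.sum_mul, mul_assoc]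

theorem diracLin_mulCLM_comp_ιCLM (a : Cl m) :
    diracLin m (mulCLM m a ∘L ιCLM m) = ∑ j, eC m j * a * eC m j := by
  simp [diracLin_apply, mul_assoc]

theorem diracLin_smulRight_innerSL (v : EuclideanSpace ℝ (Fin m)) (a : Cl m) :
    diracLin m ((innerSL ℝ v).smulRight a) = ιC m v * a := by
  simp [diracLin_apply, ιC_eq_sum v, Finset.sum_mul, EuclideanSpace.inner_single_right]

theorem diracLin_mulCLM_ιC_comp (v : EuclideanSpace ℝ (Fin m))
    (L : EuclideanSpace ℝ (Fin m) →L[ℝ] Cl m) :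
    diracLin m (mulCLM m (ιC m v) ∘L L) = -((2 : ℝ) • L v) - ιC m v * diracLin m L := by
  have hL : L v = ∑ j, v j • L (EuclideanSpace.single j 1) := by
    conv_lhs => rw [← (EuclideanSpace.basisFun (Fin m) ℝ).sum_repr v]
    simp
  simp [diracLin_apply, ← mul_assoc, eC_mul_ιC, sub_mul, Finset.sum_sub_distrib, Finset.mul_sum,
    hL, Finset.smul_sum, smul_smul]

theorem diracL_ιC_mul_mul_ιC {P : EuclideanSpace ℝ (Fin m) → Cl m}
    {x : EuclideanSpace ℝ (Fin m)} (hP : DifferentiableAt ℝ P x) :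
    diracL m (fun y => ιC m y * P y * ιC m y) x
      = -(((2 : ℝ) • fderiv ℝ P x x + ((m : ℝ) + 2) • P x) * ιC m x)
        - ιC m x * diracL m P x * ιC m x - ιC m x * ∑ j, eC m j * P x * eC m j := by
  rw [diracL_eq_diracLin_fderiv, (hasFDerivAt_ιC_mul_mul_ιC hP.hasFDerivAt).fderiv,
    diracL_eq_diracLin_fderiv, map_add, diracLin_mulCLM_flip_comp, map_add,
    diracLin_mulCLM_flip_comp, diracLin_ιCLM, diracLin_mulCLM_ιC_comp, mulCLM_mul,
    ContinuousLinearMap.comp_assoc, diracLin_mulCLM_ιC_comp, diracLin_mulCLM_comp_ιCLM]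
  simp only [ContinuousLinearMap.comp_apply, ιCLM_apply, mulCLM_apply]
  simp only [add_mul, sub_mul, neg_mul, smul_mul_assoc, one_mul, mul_assoc]
  module

theorem diracL_radial_smul {G : EuclideanSpace ℝ (Fin m) → Cl m} {D : ℝ → ℝ} {D' : ℝ}
    {x : EuclideanSpace ℝ (Fin m)} (hx : x ≠ 0) (hD : HasDerivAt D D' ‖x‖)
    (hG : DifferentiableAt ℝ G x) :
    diracL m (fun y => D ‖y‖ • G y) x
      = D ‖x‖ • diracL m G x + (D' / ‖x‖) • (ιC m x * G x) := by
  have hF : HasFDerivAt (fun y => D ‖y‖ • G y)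
      (D ‖x‖ • fderiv ℝ G x + (D' • (‖x‖⁻¹ • innerSL ℝ x)).smulRight (G x)) x :=
    (hD.comp_hasFDerivAt x (hasFDerivAt_norm_of_ne_zero hx)).smul hG.hasFDerivAt
  have hscalar : (D' • (‖x‖⁻¹ • innerSL ℝ x)).smulRight (G x)
      = (D' / ‖x‖) • (innerSL ℝ x).smulRight (G x) := by
    ext v
    simp [smul_smul, div_eq_mul_inv]
  rw [diracL_eq_diracLin_fderiv, hF.fderiv, hscalar, map_add, map_smul, map_smul,
    diracLin_smulRight_innerSL, diracL_eq_diracLin_fderiv]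

end Dirac

theorem dirac_D_smul_xPx_general (m k l : ℕ) (P : EuclideanSpace ℝ (Fin m) → Cl m)
    (hP : ContDiff ℝ 1 P) (hPmono : ∀ x, diracL m P x = 0)
    (hPhom : ∀ (t : ℝ) (x : EuclideanSpace ℝ (Fin m)), P (t • x) = t ^ k • P x)
    (hPl : ∀ x, ∑ j, eC m j * P x * eC m j
      = ((-1 : ℝ) ^ l * (2 * (l : ℝ) - (m : ℝ))) • P x)
    (D : ℝ → ℝ) (hD : ContDiffOn ℝ 1 D (Set.Ioi 0))
    (x : EuclideanSpace ℝ (Fin m)) (hx : x ≠ 0) :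
    diracL m (fun y => D ‖y‖ • (ιC m y * P y * ιC m y)) x
      = ((-1 : ℝ) ^ (l + 1) * (2 * (l : ℝ) - (m : ℝ)) * D ‖x‖) • (ιC m x * P x)
        + (-((2 * (k : ℝ) + (m : ℝ) + 2) * D ‖x‖ + ‖x‖ * deriv D ‖x‖)) • (P x * ιC m x) := by
  have hr : 0 < ‖x‖ := norm_pos_iff.mpr hx
  have hPx : HasFDerivAt P (fderiv ℝ P x) x :=
    (hP.differentiable one_ne_zero x).hasFDerivAt
  have hDx : HasDerivAt D (deriv D ‖x‖) ‖x‖ :=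
    ((hD.differentiableOn one_ne_zero).differentiableAt (Ioi_mem_nhds hr)).hasDerivAt
  have hιι : ιC m x * (ιC m x * P x * ιC m x) = -(‖x‖ ^ 2 • (P x * ιC m x)) := by
    rw [← mul_assoc, ← mul_assoc, ιC_mul_self, mul_assoc]
    simp
  rw [diracL_radial_smul hx hDx (hasFDerivAt_ιC_mul_mul_ιC hPx).differentiableAt,
    diracL_ιC_mul_mul_ιC hPx.differentiableAt, hPmono, hPl,
    fderiv_apply_self_of_homogeneous hPx.differentiableAt (hPhom · x), hιι]
  simp only [add_mul, smul_mul_assoc, mul_zero, zero_mul, sub_zero, mul_smul_comm]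
  match_scalars <;> field_simp <;> ring

/-- `∂_x(D(r) ι(x) P(x) ι(x)) = (-1)^{l+1}(2l - m) D(r) ι(x) P(x)
- ((2k + m + 2)D(r) + r D′(r)) P(x) ι(x)`. -/
theorem dirac_D_smul_xPx (m k l : ℕ) (hm : 1 ≤ m) (P : EuclideanSpace ℝ (Fin m) → Cl m)
    (hP : ContDiff ℝ 1 P) (hPmono : ∀ x, diracL m P x = 0)
    (hPhom : ∀ (t : ℝ) (x : EuclideanSpace ℝ (Fin m)), P (t • x) = t ^ k • P x)
    (hPl : ∀ x, ∑ j, eC m j * P x * eC m j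
      = ((-1 : ℝ) ^ l * (2 * (l : ℝ) - (m : ℝ))) • P x)
    (D : ℝ → ℝ) (hD : ContDiffOn ℝ 1 D (Set.Ioi 0))
    (x : EuclideanSpace ℝ (Fin m)) (hx : x ≠ 0) :
    diracL m (fun y => D ‖y‖ • (ιC m y * P y * ιC m y)) x
      = ((-1 : ℝ) ^ (l + 1) * (2 * (l : ℝ) - (m : ℝ)) * D ‖x‖) • (ιC m x * P x)
        + (-((2 * (k : ℝ) + (m : ℝ) + 2) * D ‖x‖ + ‖x‖ * deriv D ‖x‖)) • (P x * ιC m x) :=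
  dirac_D_smul_xPx_general m k l P hP hPmono hPhom hPl D hD x hx
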